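/- arXiv:2501.11921 — 2 statements merged into one kernel-verified Lean document; each statement's English description precedes it below -/
import Mathlib

section
/- Let A ∈ ℝ^{d×d}, W, K symmetric matrices, and P̄ symmetric positive semidefinite satisfying P̄ − A P̄ Aᵀ = W − K. Define h(X) = A X Aᵀ + W and h^{n+1}(X) = h(h^n(X)). Then for every n ≥ 0: Tr(h^n(P̄)) + Tr(h^{n+2}(P̄)) − 2·Tr(h^{n+1}(P̄)) = Tr(A^n (A K Aᵀ − K) (A^n)ᵀ). -/
open Matrix

/-- Exact identity for second differences of `n ↦ Tr(hⁿ(P̄))` where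
`h(X) = A X Aᵀ + W` and `P̄ - A P̄ Aᵀ = W - K`. -/
theorem stmt8 {d : ℕ} (A W K Pbar : Matrix (Fin d) (Fin d) ℝ)
    (hW : W.IsSymm) (hK : K.IsSymm) (hP : Pbar.PosSemidef)
    (hLyap : Pbar - A * Pbar * Aᵀ = W - K) :
    ∀ n : ℕ,
      ((fun X => A * X * Aᵀ + W)^[n] Pbar).trace +
        ((fun X => A * X * Aᵀ + W)^[n + 2] Pbar).trace -
        2 * ((fun X => A * X * Aᵀ + W)^[n + 1] Pbar).trace =
      (A ^ n * (A * K * Aᵀ - K) * (A ^ n)ᵀ).trace := by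
  set h : Matrix (Fin d) (Fin d) ℝ → Matrix (Fin d) (Fin d) ℝ :=
    fun X => A * X * Aᵀ + W with hh
  have hD : ∀ n : ℕ, h^[n + 1] Pbar - h^[n] Pbar = A ^ n * K * (A ^ n)ᵀ := by
    intro n
    induction n with
    | zero =>
      simp only [zero_add, Function.iterate_one, Function.iterate_zero, id, pow_zero,
        Matrix.one_mul, Matrix.mul_one, transpose_one, hh]
      have : A * Pbar * Aᵀ = Pbar - (W - K) := by
        rw [← hLyap]; abel
      rw [this]; abel
    | succ n ih =>
      have step : h^[n + 1 + 1] Pbar - h^[n + 1] Pbar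
          = A * (h^[n + 1] Pbar - h^[n] Pbar) * Aᵀ := by
        rw [Function.iterate_succ_apply', Function.iterate_succ_apply' h n]
        simp only [hh]
        rw [Matrix.mul_sub, Matrix.sub_mul]
        abel
      rw [step, ih]
      have hpt : (A ^ (n + 1))ᵀ = (A ^ n)ᵀ * Aᵀ := by
        rw [transpose_pow, pow_succ, ← transpose_pow]
      have hp : A ^ (n + 1) = A * A ^ n := by rw [← pow_succ']
      rw [hpt, hp]
      noncomm_ring
  intro n
  have e1 := congrArg Matrix.trace (hD n)
  have e2 := congrArg Matrix.trace (hD (n + 1))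
  rw [trace_sub] at e1 e2
  have key : A ^ (n + 1) * K * (A ^ (n + 1))ᵀ - A ^ n * K * (A ^ n)ᵀ
      = A ^ n * (A * K * Aᵀ - K) * (A ^ n)ᵀ := by
    rw [pow_succ, transpose_mul, Matrix.mul_sub, Matrix.sub_mul]
    noncomm_ring
  have : (A ^ n * (A * K * Aᵀ - K) * (A ^ n)ᵀ).trace
      = (A ^ (n + 1) * K * (A ^ (n + 1))ᵀ).trace
        - (A ^ n * K * (A ^ n)ᵀ).trace := by
    rw [← trace_sub, key]
  rw [this, ← e1, ← e2]
  have : n + 2 = n + 1 + 1 := rfl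
  rw [this]
  ring
end

section
/- In the goal-oriented scheduling MDP with i.i.d. channels, for any action a with a_n ≠ m and any two channel-state matrices G, G' differing only in entry (n,m): Q((δ, G), a) = Q((δ, G'), a). That is, the Q-value is independent of the channel state of a channel-device pair that is not used by the action. -/
/-- Per-device AoI transition kernel: if device `n` is scheduled on channel `m`
(with channel-state-dependent drop rate `drop n m (G n m)`), its AoI resets to 1
on success and increments on failure; if unscheduled it increments. -/
noncomputable def aoiKernel {N M g : ℕ} (drop : Fin N → Fin M → Fin g → ℝ)
    (n : Fin N) (G : Fin N → Fin M → Fin g) (a : Option (Fin M))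
    (d d' : ℕ) : ℝ :=
  match a with
  | none => if d' = d + 1 then 1 else 0
  | some m =>
      if d' = 1 then 1 - drop n m (G n m)
      else if d' = d + 1 then drop n m (G n m) else 0

/-- Q-value of the goal-oriented scheduling MDP with i.i.d. channels:
`Q(s,a) = c(δ) + γ ∑_{s⁺} P(s⁺|s,a) υ*(s⁺)`. -/
noncomputable def Qval {N M g : ℕ} (drop : Fin N → Fin M → Fin g → ℝ)
    (qdist : (Fin N → Fin M → Fin g) → ℝ) (cost : (Fin N → ℕ) → ℝ) (γ : ℝ)
    (υ : (Fin N → ℕ) → (Fin N → Fin M → Fin g) → ℝ)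
    (δ : Fin N → ℕ) (G : Fin N → Fin M → Fin g)
    (a : Fin N → Option (Fin M)) : ℝ :=
  cost δ + γ * ∑' δ' : Fin N → ℕ,
    (∏ n, aoiKernel drop n G (a n) (δ n) (δ' n)) *
      ∑ G' : Fin N → Fin M → Fin g, qdist G' * υ δ' G'

/-- The Q-value does not depend on the channel state of a device-channel pair
`(n₀, m₀)` that is not used by the action. -/
theorem stmt15 {N M g : ℕ} (drop : Fin N → Fin M → Fin g → ℝ)
    (qdist : (Fin N → Fin M → Fin g) → ℝ) (cost : (Fin N → ℕ) → ℝ) (γ : ℝ)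
    (υ : (Fin N → ℕ) → (Fin N → Fin M → Fin g) → ℝ)
    (δ : Fin N → ℕ) (G G' : Fin N → Fin M → Fin g)
    (n₀ : Fin N) (m₀ : Fin M)
    (hdiff : ∀ n m, (n, m) ≠ (n₀, m₀) → G n m = G' n m)
    (a : Fin N → Option (Fin M)) (ha : a n₀ ≠ some m₀) :
    Qval drop qdist cost γ υ δ G a = Qval drop qdist cost γ υ δ G' a := by
  have key : ∀ n m, a n = some m → G n m = G' n m := by
    intro n m hnm
    apply hdiff
    intro h
    have h1 : n = n₀ := (Prod.mk.injEq _ _ _ _ ▸ h).1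
    have h2 : m = m₀ := (Prod.mk.injEq _ _ _ _ ▸ h).2
    exact ha (h1 ▸ h2 ▸ hnm)
  unfold Qval
  congr 2
  apply tsum_congr
  intro δ'
  congr 1
  apply Finset.prod_congr rfl
  intro n _
  unfold aoiKernel
  cases h : a n with
  | none => rfl
  | some m => dsimp only; rw [key n m h]
end
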